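/- arXiv:1108.5451 — 2 statements merged into one kernel-verified Lean document; each statement's English description precedes it below -/
import Mathlib

section
/- Lemma 1: For a stratifiable definite database D = ⟨F,R⟩ with stratification λ inducing partition P = P1 ⊎ … ⊎ Pn (so that pred(Pi) ∩ pred(Pj) = ∅ for i ≠ j, and negative literals in stratum i only refer to predicates defined in strictly lower strata), the least fixpoint lfp(T^s_P, F) of the soft consequence operator equals the iterated fixpoint M_n obtained as M1 := lfp(T_{P1}, F), M2 := lfp(T_{P2}, M1), …, Mn := lfp(T_{Pn}, M_{n−1}). Hence the soft fixpoint model coincides with the perfect (iterated fixpoint) model of D. -/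
open scoped Classical

/-- A ground definite Datalog rule: head atom, positive body atoms, negated body atoms. -/
structure Rule (α : Type*) where
  head : α
  pos : Set α
  neg : Set α

/-- The immediate consequence operator T_R. -/
def TR {α : Type*} (R : Set (Rule α)) (I : Set α) : Set α :=
  I ∪ {h | ∃ r ∈ R, r.head = h ∧ r.pos ⊆ I ∧ ∀ a ∈ r.neg, a ∉ I}

/-- The soft consequence operator for a partition P (P j = ∅ for unused indices):
identity if every stratum is saturated, otherwise apply the first stratum operator
that produces new facts. -/
noncomputable def Tsoft {α : Type*} (P : ℕ → Set (Rule α)) (I : Set α) : Set α :=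
  if h : ∃ j, I ⊂ TR (P j) I then TR (P (Nat.find h)) I else I

/-- ω-iteration least fixpoint of an (inflationary) operator starting from F. -/
def iterLfp {β : Type*} (T : Set β → Set β) (F : Set β) : Set β :=
  ⋃ n : ℕ, T^[n] F

/-- The iterated fixpoint sequence M_0 = F, M_{i+1} = lfp(T_{P_i}, M_i). -/
def Mseq {α : Type*} (P : ℕ → Set (Rule α)) (F : Set α) : ℕ → Set α
  | 0 => F
  | i + 1 => iterLfp (TR (P i)) (Mseq P F i)

/- ### Auxiliary lemmas -/

lemma TR_infl {α : Type*} (R : Set (Rule α)) (I : Set α) : I ⊆ TR R I :=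
  Set.subset_union_left

lemma Tsoft_infl {α : Type*} (P : ℕ → Set (Rule α)) (I : Set α) : I ⊆ Tsoft P I := by
  unfold Tsoft
  split
  · exact TR_infl _ _
  · exact subset_rfl

lemma iter_infl {β : Type*} {T : Set β → Set β} (hT : ∀ I, I ⊆ T I) (F : Set β) :
    ∀ k, F ⊆ T^[k] F := by
  intro k
  induction k with
  | zero => exact subset_rfl
  | succ k ih =>
    rw [Function.iterate_succ_apply']
    exact ih.trans (hT _)

lemma iter_step {β : Type*} {T : Set β → Set β} (hT : ∀ I, I ⊆ T I) (F : Set β) (k : ℕ) :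
    T^[k] F ⊆ T^[k+1] F := by
  rw [Function.iterate_succ_apply']
  exact hT _

lemma iter_mono {β : Type*} {T : Set β → Set β} (hT : ∀ I, I ⊆ T I) (F : Set β) :
    Monotone fun k => T^[k] F :=
  monotone_nat_of_le_succ (iter_step hT F)

lemma subset_iterLfp {β : Type*} (T : Set β → Set β) (F : Set β) (k : ℕ) :
    T^[k] F ⊆ iterLfp T F :=
  Set.subset_iUnion (fun k => T^[k] F) k

lemma F_subset_iterLfp {β : Type*} (T : Set β → Set β) (F : Set β) :
    F ⊆ iterLfp T F :=
  subset_iterLfp T F 0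

/-- On a finite type, the ω-iteration of an inflationary operator reaches a point
where the operator stabilizes. -/
lemma exists_stab {α : Type*} [Fintype α] {T : Set α → Set α} (hT : ∀ I, I ⊆ T I)
    (F : Set α) : ∃ N, T^[N+1] F = T^[N] F := by
  by_contra hcon
  push_neg at hcon
  have hstrict : ∀ k, T^[k] F ⊂ T^[k+1] F := fun k =>
    (iter_step hT F k).ssubset_of_ne (Ne.symm (hcon k))
  have hcard : ∀ k, k ≤ (T^[k] F).ncard := by
    intro k
    induction k with
    | zero => exact Nat.zero_le _
    | succ k ih =>
      have := Set.ncard_lt_ncard (hstrict k) (Set.toFinite _)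
      omega
  have h1 : (Fintype.card α + 1 : ℕ) ≤ (T^[Fintype.card α + 1] F).ncard :=
    hcard _
  have h2 : (T^[Fintype.card α + 1] F).ncard ≤ Fintype.card α := by
    have := Set.ncard_le_ncard (Set.subset_univ (T^[Fintype.card α + 1] F))
      (Set.toFinite _)
    simpa [Set.ncard_univ] using this
  omega

lemma iter_const {α : Type*} {T : Set α → Set α} {F : Set α} {N : ℕ}
    (hN : T^[N+1] F = T^[N] F) : ∀ m, N ≤ m → T^[m] F = T^[N] F := by
  intro m hm
  induction m with
  | zero =>
    have : N = 0 := by omega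
    rw [this]
  | succ m ih =>
    rcases Nat.lt_or_ge N (m+1) with h | h
    · have hNm : N ≤ m := by omega
      calc T^[m+1] F = T (T^[m] F) := Function.iterate_succ_apply' T m F
        _ = T (T^[N] F) := by rw [ih hNm]
        _ = T^[N+1] F := (Function.iterate_succ_apply' T N F).symm
        _ = T^[N] F := hN
    · have : N = m + 1 := by omega
      rw [this]

lemma iterLfp_stab {α : Type*} [Fintype α] {T : Set α → Set α} (hT : ∀ I, I ⊆ T I)
    (F : Set α) : ∃ N, iterLfp T F = T^[N] F ∧ T^[N+1] F = T^[N] F := by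
  obtain ⟨N, hN⟩ := exists_stab hT F
  refine ⟨N, subset_antisymm ?_ (subset_iterLfp T F N), hN⟩
  apply Set.iUnion_subset
  intro k
  rcases le_or_gt k N with h | h
  · exact iter_mono hT F h
  · rw [iter_const hN k h.le]

lemma iterLfp_fix {α : Type*} [Fintype α] {T : Set α → Set α} (hT : ∀ I, I ⊆ T I)
    (F : Set α) : T (iterLfp T F) = iterLfp T F := by
  obtain ⟨N, heq, hN⟩ := iterLfp_stab hT F
  rw [heq, ← Function.iterate_succ_apply' T N F]
  exact hN

lemma F_subset_Mseq {α : Type*} (P : ℕ → Set (Rule α)) (F : Set α) :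
    ∀ m, F ⊆ Mseq P F m := by
  intro m
  induction m with
  | zero => exact subset_rfl
  | succ m ih => exact ih.trans (F_subset_iterLfp _ _)

lemma Mseq_mono {α : Type*} (P : ℕ → Set (Rule α)) (F : Set α) :
    Monotone (Mseq P F) := by
  apply monotone_nat_of_le_succ
  intro m
  exact F_subset_iterLfp _ _

/-- Key stratification lemma: a fact of stratum `< j` belonging to any `Mseq` stage
already belongs to stage `j`. -/
lemma Mseq_strat {α π : Type*} (predOf : α → π) (strat : π → ℕ)
    (P : ℕ → Set (Rule α)) (F : Set α)
    (hhead : ∀ i, ∀ r ∈ P i, strat (predOf r.head) = i) :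
    ∀ m j a, a ∈ Mseq P F m → strat (predOf a) < j → a ∈ Mseq P F j := by
  intro m
  induction m with
  | zero =>
    intro j a ha _
    exact F_subset_Mseq P F j ha
  | succ m ih =>
    intro j a ha hlt
    -- a ∈ iterLfp (TR (P m)) (Mseq P F m)
    obtain ⟨k, hk⟩ : ∃ k, a ∈ (TR (P m))^[k] (Mseq P F m) := by
      simpa [Mseq, iterLfp] using ha
    clear ha
    induction k generalizing a with
    | zero => exact ih j a hk hlt
    | succ k ihk =>
      rw [Function.iterate_succ_apply'] at hk
      rcases hk with hk | hk
      · exact ihk a hlt hk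
      · obtain ⟨r, hr, hhd, hp, hn⟩ := hk
        have hs : strat (predOf a) = m := hhd ▸ hhead m r hr
        have hmj : m + 1 ≤ j := by omega
        have hmem : a ∈ Mseq P F (m+1) := by
          have : a ∈ (TR (P m))^[k+1] (Mseq P F m) := by
            rw [Function.iterate_succ_apply']
            exact Or.inr ⟨r, hr, hhd, hp, hn⟩
          exact subset_iterLfp _ _ (k+1) this
        exact Mseq_mono P F hmj hmem

/-- Key lemma B: any set `J` between `F` and `Mseq P F n` that is saturated for all
strata `< j` contains `Mseq P F j`. -/
lemma Mseq_subset_of_sat {α π : Type*} (predOf : α → π) (strat : π → ℕ) (n : ℕ)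
    (P : ℕ → Set (Rule α)) (F : Set α)
    (hhead : ∀ i, ∀ r ∈ P i, strat (predOf r.head) = i)
    (hneg : ∀ i, ∀ r ∈ P i, ∀ a ∈ r.neg, strat (predOf a) < i)
    (J : Set α) (hF : F ⊆ J) (hJM : J ⊆ Mseq P F n) :
    ∀ j, (∀ i, i < j → TR (P i) J = J) → Mseq P F j ⊆ J := by
  intro j
  induction j with
  | zero => intro _; exact hF
  | succ j ih =>
    intro hsat
    have hMj : Mseq P F j ⊆ J := ih (fun i hi => hsat i (by omega))
    -- show each iterate is ⊆ J
    have hiter : ∀ k, (TR (P j))^[k] (Mseq P F j) ⊆ J := by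
      intro k
      induction k with
      | zero => exact hMj
      | succ k ihk =>
        rw [Function.iterate_succ_apply']
        intro a ha
        rcases ha with ha | ha
        · exact ihk ha
        · obtain ⟨r, hr, hhd, hpos', hneg'⟩ := ha
          have hfire : a ∈ TR (P j) J := by
            right
            refine ⟨r, hr, hhd, hpos'.trans ihk, ?_⟩
            intro b hb hbJ
            have hbM : b ∈ Mseq P F n := hJM hbJ
            have hbj : b ∈ Mseq P F j :=
              Mseq_strat predOf strat P F hhead n j b hbM (hneg j r hr b hb)
            have : b ∈ (TR (P j))^[k] (Mseq P F j) :=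
              iter_infl (fun I => TR_infl (P j) I) (Mseq P F j) k hbj
            exact hneg' b hb this
          rwa [hsat j (by omega)] at hfire
    intro a ha
    obtain ⟨k, hk⟩ : ∃ k, a ∈ (TR (P j))^[k] (Mseq P F j) := by
      simpa [Mseq, iterLfp] using ha
    exact hiter k hk

/-- Lemma 1: for a stratifiable database whose partition is induced by
a stratification (head predicates of stratum i lie exactly in stratum i — hence the
predicates of distinct strata are disjoint —, positive body predicates in strata ≤ i,
negated body predicates in strata < i), the least fixpoint of the soft consequence
operator equals the iterated fixpoint M_n; i.e. the soft fixpoint model coincides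
with the perfect (iterated fixpoint) model. -/
theorem soft_lfp_eq_iterated_fixpoint {α π : Type*} [Fintype α]
    (predOf : α → π) (strat : π → ℕ) (n : ℕ) (P : ℕ → Set (Rule α))
    (hhead : ∀ i, ∀ r ∈ P i, strat (predOf r.head) = i)
    (hpos : ∀ i, ∀ r ∈ P i, ∀ a ∈ r.pos, strat (predOf a) ≤ i)
    (hneg : ∀ i, ∀ r ∈ P i, ∀ a ∈ r.neg, strat (predOf a) < i)
    (hbound : ∀ i, n ≤ i → P i = ∅)
    (F : Set α)
    (hbase : ∀ a ∈ F, ∀ i, ∀ r ∈ P i, predOf r.head ≠ predOf a) :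
    iterLfp (Tsoft P) F = Mseq P F n := by
  set L := iterLfp (Tsoft P) F with hL
  -- Step 1: every soft iterate is contained in Mseq P F n.
  have hstep : ∀ k, (Tsoft P)^[k] F ⊆ Mseq P F n := by
    intro k
    induction k with
    | zero => exact F_subset_Mseq P F n
    | succ k ih =>
      rw [Function.iterate_succ_apply']
      set J := (Tsoft P)^[k] F with hJdef
      unfold Tsoft
      split
      case isTrue h =>
        set j := Nat.find h with hj
        have hfind : J ⊂ TR (P j) J := Nat.find_spec h
        have hmin : ∀ i, i < j → TR (P i) J = J := by
          intro i hi
          have hns : ¬ J ⊂ TR (P i) J := Nat.find_min h hi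
          rcases (TR_infl (P i) J).ssubset_or_eq with hss | heq
          · exact absurd hss hns
          · exact heq.symm
        have hFJ : F ⊆ J := iter_infl (Tsoft_infl P) F k
        have hMjJ : Mseq P F j ⊆ J :=
          Mseq_subset_of_sat predOf strat n P F hhead hneg J hFJ ih j hmin
        -- show TR (P j) J ⊆ Mseq P F n
        intro a ha
        rcases ha with ha | ha
        · exact ih ha
        · obtain ⟨r, hr, hhd, hpos', hneg'⟩ := ha
          have hjn : j < n := by
            by_contra hcon
            push_neg at hcon
            rw [hbound j hcon] at hr
            exact hr
          -- a belongs to Mseq P F (j+1) since M_{j+1} is a fixpoint of TR (P j)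
          have hfix : TR (P j) (Mseq P F (j+1)) = Mseq P F (j+1) := by
            show TR (P j) (iterLfp (TR (P j)) (Mseq P F j)) = _
            exact iterLfp_fix (fun I => TR_infl (P j) I) (Mseq P F j)
          have ha1 : a ∈ TR (P j) (Mseq P F (j+1)) := by
            right
            refine ⟨r, hr, hhd, ?_, ?_⟩
            · intro b hb
              have hbM : b ∈ Mseq P F n := ih (hpos' hb)
              exact Mseq_strat predOf strat P F hhead n (j+1) b hbM
                (by have := hpos j r hr b hb; omega)
            · intro b hb hbM1
              have hbj : b ∈ Mseq P F j :=
                Mseq_strat predOf strat P F hhead (j+1) j b hbM1 (hneg j r hr b hb)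
              exact hneg' b hb (hMjJ hbj)
          rw [hfix] at ha1
          exact Mseq_mono P F (by omega : j + 1 ≤ n) ha1
      case isFalse h => exact ih
  have hLM : L ⊆ Mseq P F n := by
    rw [hL]
    apply Set.iUnion_subset
    exact hstep
  -- Step 2: Mseq P F n ⊆ L, since L is a fixpoint of every stratum operator.
  have hLfix : Tsoft P L = L := iterLfp_fix (Tsoft_infl P) F
  have hsat : ∀ i, TR (P i) L = L := by
    intro i
    rcases (TR_infl (P i) L).ssubset_or_eq with hss | heq
    · exfalso
      have h : ∃ j, L ⊂ TR (P j) L := ⟨i, hss⟩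
      have : Tsoft P L = TR (P (Nat.find h)) L := dif_pos h
      have hss' : L ⊂ TR (P (Nat.find h)) L := Nat.find_spec h
      rw [hLfix] at this
      exact hss'.ne this
    · exact heq.symm
  have hFL : F ⊆ L := F_subset_iterLfp _ _
  have hML : Mseq P F n ⊆ L :=
    Mseq_subset_of_sat predOf strat n P F hhead hneg L hFL hLM n
      (fun i _ => hsat i)
  exact subset_antisymm hLM hML
end

section
/- Key step for Lemma 1: if λ is a stratification inducing partition P1 ⊎ … ⊎ Pn with pred(Pi) ∩ pred(Pj) = ∅ for i ≠ j, and I is an interpretation with T_{P_i}(I) = I, then for any set J of facts whose predicates all belong to strata strictly greater than i, T_{P_i}(I ∪ J) ⊆ I ∪ J (the rules of stratum i can never fire again after saturation). -/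
open scoped Classical

/-- key step for Lemma 1: once stratum i is saturated (T_{P_i}(I) = I),
adding facts J whose predicates live in strictly higher strata cannot make the rules
of stratum i fire again: T_{P_i}(I ∪ J) ⊆ I ∪ J. -/
theorem stratum_saturated_stable {α π : Type*}
    (predOf : α → π) (strat : π → ℕ) (i : ℕ) (Pi : Set (Rule α))
    (hhead : ∀ r ∈ Pi, strat (predOf r.head) = i)
    (hpos : ∀ r ∈ Pi, ∀ a ∈ r.pos, strat (predOf a) ≤ i)
    (hneg : ∀ r ∈ Pi, ∀ a ∈ r.neg, strat (predOf a) < i)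
    (I : Set α) (hI : TR Pi I = I)
    (J : Set α) (hJ : ∀ a ∈ J, i < strat (predOf a)) :
    TR Pi (I ∪ J) ⊆ I ∪ J := by
  intro h hh
  rcases hh with hh | ⟨r, hr, hhead', hposr, hnegr⟩
  · exact hh
  · left
    rw [← hI]
    right
    refine ⟨r, hr, hhead', ?_, ?_⟩
    · intro a ha
      rcases hposr ha with h' | h'
      · exact h'
      · exact absurd (hpos r hr a ha) (not_le.mpr (hJ a h'))
    · intro a ha haI
      exact hnegr a ha (Or.inl haI)
end
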